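/- The graph R_n(3,3) on n ≥ 6 vertices (two triangles sharing a vertex u, with k = n−5 pendant edges attached to a degree-2 vertex v₁ of one triangle) has exactly 2k+4 maximal matchings of size 2 and exactly k maximal matchings of size 3, and no others; hence avm(R_n(3,3)) = (7n−27)/(3n−11). -/

import Mathlib

/-!
Every maximal matching covers `v₁`: otherwise a leaf at `v₁` and `v₁` itself would both be free.
Given the mate `x` of `v₁`, the requirement that the edges `w₁w₂` and `uv₂` be covered forces the
rest of the matching: for `x = u` it is `w₁w₂`; for `x = v₂` one edge of the triangle `u w₁ w₂`;
for a leaf `x` either `uw₁`, `uw₂`, or both `uv₂` and `w₁w₂`. This gives `4 + 2k` maximal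
matchings of size `2` and `k` of size `3`, whence the average `(2 (2k + 4) + 3k) / (3k + 4)`.
-/

open scoped Classical

/-- `M` is a matching of `G`, viewed as a finite set of edges. -/
def IsMatchingSet {V : Type*} (G : SimpleGraph V) (M : Finset (Sym2 V)) : Prop :=
  (M : Set (Sym2 V)) ⊆ G.edgeSet ∧
    (M : Set (Sym2 V)).Pairwise fun e f => ∀ v : V, ¬(v ∈ e ∧ v ∈ f)

/-- `M` is a maximal matching of `G`. -/
def IsMaximalMatching {V : Type*} (G : SimpleGraph V) (M : Finset (Sym2 V)) : Prop :=
  IsMatchingSet G M ∧ ∀ N : Finset (Sym2 V), IsMatchingSet G N → M ⊆ N → N = M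

/-- The finite set of all maximal matchings of a finite graph. -/
noncomputable def maximalMatchings {V : Type*} [Fintype V] [DecidableEq V]
    (G : SimpleGraph V) : Finset (Finset (Sym2 V)) :=
  G.edgeFinset.powerset.filter fun M => IsMaximalMatching G M

/-- The average size of a maximal matching of `G`. -/
noncomputable def avm {V : Type*} [Fintype V] [DecidableEq V] (G : SimpleGraph V) : ℚ :=
  (∑ M ∈ maximalMatchings G, (M.card : ℚ)) / ((maximalMatchings G).card : ℚ)

/-- `R_n(3,3)`: two triangles sharing the vertex `0 = u`; `1 = v₁`, `2 = v₂`,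
`3 = w₁`, `4 = w₂`, and every vertex `i` with `5 ≤ i` is a leaf attached to `v₁`. -/
def R33 (n : ℕ) : SimpleGraph (Fin n) :=
  SimpleGraph.fromRel fun x y =>
    ((x : ℕ) = 0 ∧ (y : ℕ) = 1) ∨ ((x : ℕ) = 1 ∧ (y : ℕ) = 2) ∨
    ((x : ℕ) = 0 ∧ (y : ℕ) = 2) ∨ ((x : ℕ) = 0 ∧ (y : ℕ) = 3) ∨
    ((x : ℕ) = 3 ∧ (y : ℕ) = 4) ∨ ((x : ℕ) = 0 ∧ (y : ℕ) = 4) ∨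
    ((x : ℕ) = 1 ∧ 5 ≤ (y : ℕ))

section Matching

variable {V : Type*} {G : SimpleGraph V} {M : Finset (Sym2 V)}

theorem IsMatchingSet.eq_of_mem_of_mem (hM : IsMatchingSet G M) {e f : Sym2 V} (he : e ∈ M)
    (hf : f ∈ M) {v : V} (hve : v ∈ e) (hvf : v ∈ f) : e = f := by
  by_contra hne
  exact hM.2 he hf hne v ⟨hve, hvf⟩

theorem IsMatchingSet.eq_or_disjoint (hM : IsMatchingSet G M) {a b c d : V}
    (h₁ : s(a, b) ∈ M) (h₂ : s(c, d) ∈ M) :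
    s(a, b) = s(c, d) ∨ a ≠ c ∧ a ≠ d ∧ b ≠ c ∧ b ≠ d := by
  refine or_iff_not_imp_left.2 fun hne => ?_
  have h := hM.2 h₁ h₂ hne
  exact ⟨fun h' => h a (by simp [h']), fun h' => h a (by simp [h']),
    fun h' => h b (by simp [h']), fun h' => h b (by simp [h'])⟩

theorem isMaximalMatching_iff :
    IsMaximalMatching G M ↔
      IsMatchingSet G M ∧ ∀ x y, G.Adj x y → (∃ e ∈ M, x ∈ e) ∨ ∃ e ∈ M, y ∈ e := by
  constructor
  · rintro ⟨hM, hmax⟩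
    refine ⟨hM, fun x y hxy => ?_⟩
    by_contra! hfree
    have hins : IsMatchingSet G (insert s(x, y) M) := by
      refine ⟨?_, ?_⟩
      · rw [Finset.coe_insert, Set.insert_subset_iff]
        exact ⟨hxy, hM.1⟩
      · rw [Finset.coe_insert, Set.pairwise_insert]
        refine ⟨hM.2, fun e he _ => ⟨?_, ?_⟩⟩
        · rintro v ⟨hv, hve⟩
          rcases Sym2.mem_iff.1 hv with rfl | rfl
          exacts [hfree.1 e he hve, hfree.2 e he hve]
        · rintro v ⟨hve, hv⟩
          rcases Sym2.mem_iff.1 hv with rfl | rfl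
          exacts [hfree.1 e he hve, hfree.2 e he hve]
    have hmem := hmax _ hins (Finset.subset_insert _ _) ▸ Finset.mem_insert_self s(x, y) M
    exact hfree.1 _ hmem (Sym2.mem_mk_left x y)
  · rintro ⟨hM, hcov⟩
    refine ⟨hM, fun N hN hMN => Finset.Subset.antisymm (fun f hf => ?_) hMN⟩
    induction f using Sym2.ind with
    | h x y =>
      by_contra hfM
      obtain ⟨e, he, hv⟩ | ⟨e, he, hv⟩ := hcov x y (hN.1 hf)
      · exact hfM (IsMatchingSet.eq_of_mem_of_mem hN (hMN he) hf hv (Sym2.mem_mk_left x y) ▸ he)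
      · exact hfM (IsMatchingSet.eq_of_mem_of_mem hN (hMN he) hf hv (Sym2.mem_mk_right x y) ▸ he)

theorem IsMaximalMatching.exists_mk_mem_of_adj (hM : IsMaximalMatching G M) {a b : V}
    (hab : G.Adj a b) : ∃ x y, s(x, y) ∈ M ∧ G.Adj x y ∧ (x = a ∨ x = b) := by
  rcases (isMaximalMatching_iff.1 hM).2 a b hab with ⟨e, he, hv⟩ | ⟨e, he, hv⟩ <;>
    obtain ⟨y, rfl⟩ := Sym2.mem_iff_exists.1 hv
  exacts [⟨a, y, he, hM.1.1 he, Or.inl rfl⟩, ⟨b, y, he, hM.1.1 he, Or.inr rfl⟩]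

theorem mem_maximalMatchings [Fintype V] [DecidableEq V] :
    M ∈ maximalMatchings G ↔ IsMaximalMatching G M := by
  simp only [maximalMatchings, Finset.mem_filter, Finset.mem_powerset, and_iff_right_iff_imp]
  exact fun h e he => SimpleGraph.mem_edgeFinset.2 (h.1.1 he)

theorem avm_eq_of_card_eq_two_or_three [Fintype V] [DecidableEq V]
    (h : ∀ M ∈ maximalMatchings G, M.card = 2 ∨ M.card = 3) :
    avm G = (2 * ((maximalMatchings G).filter fun M => M.card = 2).card +
        3 * ((maximalMatchings G).filter fun M => M.card = 3).card) /
      (((maximalMatchings G).filter fun M => M.card = 2).card +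
        ((maximalMatchings G).filter fun M => M.card = 3).card) := by
  have hthree : ((maximalMatchings G).filter fun M => ¬M.card = 2) =
      (maximalMatchings G).filter fun M => M.card = 3 :=
    Finset.filter_congr fun M hM => by have := h M hM; omega
  rw [avm, ← Finset.sum_filter_add_sum_filter_not _ (fun M => M.card = 2),
    ← Finset.card_filter_add_card_filter_not (fun M => M.card = 2), hthree, ← Nat.cast_sum,
    ← Nat.cast_sum, Finset.sum_const_nat fun M hM => (Finset.mem_filter.1 hM).2,
    Finset.sum_const_nat fun M hM => (Finset.mem_filter.1 hM).2]
  push_cast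
  ring

end Matching

theorem insert_mk_injOn {V : Type*} [DecidableEq V] (v : V) :
    Set.InjOn (fun p : V × Finset (Sym2 V) => insert s(v, p.1) p.2) {p | ∀ e ∈ p.2, v ∉ e} := by
  rintro ⟨x, T⟩ hT ⟨x', T'⟩ hT' h
  simp only [Set.mem_ofPred_eq] at hT hT' h
  have hxx' : x = x' := by
    have hmem := h ▸ Finset.mem_insert_self s(v, x) T
    rcases Finset.mem_insert.1 hmem with heq | hmem
    · exact Sym2.congr_right.1 heq
    · exact absurd (Sym2.mem_mk_left v x) (hT' _ hmem)
  subst hxx'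
  have hTT' := congrArg (fun S => S.erase s(v, x)) h
  simp only [Finset.erase_insert fun hmem => hT _ hmem (Sym2.mem_mk_left v x),
    Finset.erase_insert fun hmem => hT' _ hmem (Sym2.mem_mk_left v x)] at hTT'
  rw [hTT']

namespace R33

variable {n : ℕ} (hn : 6 ≤ n)

def u : Fin n := ⟨0, by omega⟩
def v₁ : Fin n := ⟨1, by omega⟩
def v₂ : Fin n := ⟨2, by omega⟩
def w₁ : Fin n := ⟨3, by omega⟩
def w₂ : Fin n := ⟨4, by omega⟩
def leaves : Finset (Fin n) := Finset.Ici ⟨5, by omega⟩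

/-- A maximal matching is encoded as `(x, T)`: the mate `x` of `v₁` together with the remaining
edges `T`. -/
def matchingOf (p : Fin n × Finset (Sym2 (Fin n))) : Finset (Sym2 (Fin n)) :=
  insert s(v₁ hn, p.1) p.2

def pairData : Finset (Fin n × Finset (Sym2 (Fin n))) :=
  {(u hn, {s(w₁ hn, w₂ hn)}), (v₂ hn, {s(u hn, w₁ hn)}), (v₂ hn, {s(w₁ hn, w₂ hn)}),
    (v₂ hn, {s(u hn, w₂ hn)})} ∪ leaves hn ×ˢ {{s(u hn, w₁ hn)}, {s(u hn, w₂ hn)}}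

def tripleData : Finset (Fin n × Finset (Sym2 (Fin n))) :=
  leaves hn ×ˢ {{s(u hn, v₂ hn), s(w₁ hn, w₂ hn)}}

@[simp] theorem mem_leaves {x : Fin n} : x ∈ leaves hn ↔ 5 ≤ (x : ℕ) := by
  simp [leaves, Fin.le_def]

theorem card_leaves : (leaves hn).card = n - 5 := by
  simp [leaves]

attribute [local simp] u v₁ v₂ w₁ w₂ pairData tripleData matchingOf Sym2.eq_iff R33
  SimpleGraph.fromRel_adj

theorem card_pairData : (pairData hn).card = 2 * (n - 5) + 4 := by
  rw [pairData, Finset.card_union_of_disjoint, Finset.card_product, card_leaves]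
  · simp [Finset.card_insert_of_notMem, Fin.ext_iff]
    omega
  · simp [Finset.disjoint_left, Fin.ext_iff]

theorem card_tripleData : (tripleData hn).card = n - 5 := by
  simp [tripleData, card_leaves]

theorem v₁_notMem_of_mem_data {p : Fin n × Finset (Sym2 (Fin n))}
    (hp : p ∈ pairData hn ∪ tripleData hn) : ∀ e ∈ p.2, v₁ hn ∉ e := by
  obtain ⟨x, T⟩ := p
  simp only [pairData, tripleData, Finset.mem_union, Finset.mem_insert, Finset.mem_singleton,
    Finset.mem_product, Prod.mk.injEq] at hp
  rcases hp with
    ((⟨rfl, rfl⟩ | ⟨rfl, rfl⟩ | ⟨rfl, rfl⟩ | ⟨rfl, rfl⟩) | ⟨-, rfl | rfl⟩) | ⟨-, rfl⟩ <;>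
    simp [Fin.ext_iff]

theorem isMaximalMatching_matchingOf {p : Fin n × Finset (Sym2 (Fin n))}
    (hp : p ∈ pairData hn ∪ tripleData hn) : IsMaximalMatching (R33 n) (matchingOf hn p) := by
  obtain ⟨x, T⟩ := p
  simp only [pairData, tripleData, Finset.mem_union, Finset.mem_insert, Finset.mem_singleton,
    Finset.mem_product, Prod.mk.injEq] at hp
  rcases hp with
    ((⟨rfl, rfl⟩ | ⟨rfl, rfl⟩ | ⟨rfl, rfl⟩ | ⟨rfl, rfl⟩) | ⟨hx, rfl | rfl⟩) | ⟨hx, rfl⟩ <;>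
  · rw [isMaximalMatching_iff]
    refine ⟨⟨?_, ?_⟩, fun y z hyz => ?_⟩
    · simp [Set.insert_subset_iff, Fin.ext_iff] at * <;> omega
    · simp [Set.pairwise_insert, -u, -v₁, -v₂, -w₁, -w₂]
      simp [Fin.ext_iff] at * <;> omega
    · simp [Fin.ext_iff] at *
      omega

theorem exists_mk_v₁_mem {M : Finset (Sym2 (Fin n))} (hM : IsMaximalMatching (R33 n) M) :
    ∃ x, s(v₁ hn, x) ∈ M := by
  obtain ⟨x, y, hxy, hadj, rfl | rfl⟩ :=
    hM.exists_mk_mem_of_adj (a := v₁ hn) (b := ⟨5, by omega⟩) (by simp)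
  · exact ⟨y, hxy⟩
  · obtain rfl : y = v₁ hn := by simp [Fin.ext_iff] at hadj ⊢; omega
    exact ⟨_, Sym2.eq_swap ▸ hxy⟩

theorem exists_mem_data_matchingOf_eq {M : Finset (Sym2 (Fin n))}
    (hM : IsMaximalMatching (R33 n) M) :
    ∃ p ∈ pairData hn ∪ tripleData hn, matchingOf hn p = M := by
  have eq_of_subset : ∀ p ∈ pairData hn ∪ tripleData hn, matchingOf hn p ⊆ M →
      matchingOf hn p = M := fun p hp h => ((isMaximalMatching_matchingOf hn hp).2 M hM.1 h).symm
  obtain ⟨x, hx⟩ := exists_mk_v₁_mem hn hM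
  have hx' : (R33 n).Adj (v₁ hn) x := hM.1.1 hx
  obtain ⟨y, z, hyz, hyz', hy⟩ := hM.exists_mk_mem_of_adj (a := w₁ hn) (b := w₂ hn) (by simp)
  have hsep := hM.1.eq_or_disjoint hyz hx
  by_cases hp : (x, {s(y, z)}) ∈ pairData hn
  · exact ⟨_, Finset.mem_union_left _ hp, eq_of_subset _ (Finset.mem_union_left _ hp)
      (Finset.insert_subset_iff.2 ⟨hx, Finset.singleton_subset_iff.2 hyz⟩)⟩
  -- Otherwise `x` is a leaf and `w₁w₂ ∈ M`, and the edge `uv₂` still has to be covered.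
  have hleaf : 5 ≤ (x : ℕ) ∧ s(y, z) = s(w₁ hn, w₂ hn) := by
    simp [Fin.ext_iff] at hp hx' hyz' hy hsep ⊢; omega
  obtain ⟨a, b, hab, hab', ha⟩ := hM.exists_mk_mem_of_adj (a := u hn) (b := v₂ hn) (by simp)
  have hsep₁ := hM.1.eq_or_disjoint hab hx
  have hsep₂ := hM.1.eq_or_disjoint hab hyz
  have hab_eq : s(a, b) = s(u hn, v₂ hn) := by
    simp [Fin.ext_iff] at hab' ha hsep₁ hsep₂ hleaf ⊢; omega
  have hp₃ : (x, {s(u hn, v₂ hn), s(w₁ hn, w₂ hn)}) ∈ pairData hn ∪ tripleData hn :=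
    Finset.mem_union_right _ (by simp [hleaf.1])
  refine ⟨_, hp₃, eq_of_subset _ hp₃ ?_⟩
  simp only [matchingOf, Finset.insert_subset_iff, Finset.singleton_subset_iff]
  exact ⟨hx, hab_eq ▸ hab, hleaf.2 ▸ hyz⟩

theorem maximalMatchings_eq :
    maximalMatchings (R33 n) = (pairData hn ∪ tripleData hn).image (matchingOf hn) := by
  ext M
  rw [mem_maximalMatchings, Finset.mem_image]
  exact ⟨exists_mem_data_matchingOf_eq hn, fun ⟨p, hp, h⟩ => h ▸ isMaximalMatching_matchingOf hn hp⟩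

theorem card_matchingOf {p : Fin n × Finset (Sym2 (Fin n))}
    (hp : p ∈ pairData hn ∪ tripleData hn) : (matchingOf hn p).card = p.2.card + 1 :=
  Finset.card_insert_of_notMem fun h => v₁_notMem_of_mem_data hn hp _ h (Sym2.mem_mk_left _ _)

theorem card_snd_of_mem_pairData {p : Fin n × Finset (Sym2 (Fin n))} (hp : p ∈ pairData hn) :
    p.2.card = 1 := by
  obtain ⟨x, T⟩ := p
  simp only [pairData, Finset.mem_union, Finset.mem_insert, Finset.mem_singleton,
    Finset.mem_product, Prod.mk.injEq] at hp
  rcases hp with (⟨-, rfl⟩ | ⟨-, rfl⟩ | ⟨-, rfl⟩ | ⟨-, rfl⟩) | ⟨-, rfl | rfl⟩ <;> rfl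

theorem card_snd_of_mem_tripleData {p : Fin n × Finset (Sym2 (Fin n))}
    (hp : p ∈ tripleData hn) : p.2.card = 2 := by
  simp only [tripleData, Finset.mem_product, Finset.mem_singleton] at hp
  simp [hp.2, Fin.ext_iff]

theorem card_filter_maximalMatchings (k : ℕ) :
    ((maximalMatchings (R33 n)).filter fun M => M.card = k).card =
      ((pairData hn ∪ tripleData hn).filter fun p => p.2.card + 1 = k).card := by
  rw [maximalMatchings_eq hn, Finset.filter_image, Finset.card_image_of_injOn]
  · exact congrArg _ (Finset.filter_congr fun p hp => by rw [card_matchingOf hn hp])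
  · exact (insert_mk_injOn (v₁ hn)).mono fun p hp =>
      v₁_notMem_of_mem_data hn (Finset.mem_of_mem_filter p hp)

theorem card_filter_card_eq_two (hn : 6 ≤ n) :
    ((maximalMatchings (R33 n)).filter fun M => M.card = 2).card = 2 * (n - 5) + 4 := by
  rw [card_filter_maximalMatchings hn, Finset.filter_union,
    Finset.filter_true_of_mem fun p hp => by rw [card_snd_of_mem_pairData hn hp],
    Finset.filter_false_of_mem fun p hp => by rw [card_snd_of_mem_tripleData hn hp]; simp,
    Finset.union_empty, card_pairData]

theorem card_filter_card_eq_three (hn : 6 ≤ n) :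
    ((maximalMatchings (R33 n)).filter fun M => M.card = 3).card = n - 5 := by
  rw [card_filter_maximalMatchings hn, Finset.filter_union,
    Finset.filter_false_of_mem fun p hp => by rw [card_snd_of_mem_pairData hn hp]; simp,
    Finset.filter_true_of_mem fun p hp => by rw [card_snd_of_mem_tripleData hn hp],
    Finset.empty_union, card_tripleData]

theorem card_eq_two_or_three_of_mem (hn : 6 ≤ n) {M : Finset (Sym2 (Fin n))}
    (hM : M ∈ maximalMatchings (R33 n)) : M.card = 2 ∨ M.card = 3 := by
  obtain ⟨p, hp, rfl⟩ := Finset.mem_image.1 (maximalMatchings_eq hn ▸ hM)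
  rw [card_matchingOf hn hp]
  rcases Finset.mem_union.1 hp with hp | hp
  · exact Or.inl (by rw [card_snd_of_mem_pairData hn hp])
  · exact Or.inr (by rw [card_snd_of_mem_tripleData hn hp])

end R33

theorem stmt4 (n : ℕ) (hn : 6 ≤ n) :
    ((maximalMatchings (R33 n)).filter fun M => M.card = 2).card = 2 * (n - 5) + 4 ∧
    ((maximalMatchings (R33 n)).filter fun M => M.card = 3).card = n - 5 ∧
    (∀ M ∈ maximalMatchings (R33 n), M.card = 2 ∨ M.card = 3) ∧
    avm (R33 n) = (7 * (n : ℚ) - 27) / (3 * (n : ℚ) - 11) := by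
  have h₂₃ : ∀ M ∈ maximalMatchings (R33 n), M.card = 2 ∨ M.card = 3 :=
    fun _ => R33.card_eq_two_or_three_of_mem hn
  refine ⟨R33.card_filter_card_eq_two hn, R33.card_filter_card_eq_three hn, h₂₃, ?_⟩
  rw [avm_eq_of_card_eq_two_or_three h₂₃, R33.card_filter_card_eq_two hn,
    R33.card_filter_card_eq_three hn]
  push_cast [Nat.cast_sub (by omega : 5 ≤ n)]
  ring
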